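/- Define a : ℕ → ℝ by a = sup_{n≥0} 2^(-2^(3n)) χ_{[0, 2^(2^(3n)))}, let T be the geometric-mean transform (Tz)(k) = (∏_{m=0}^k z(m))^(1/(k+1)), and σ_M the M-fold dilation. Then for every l ≥ 1 the pointwise inequality T²a ≤ 2^l · σ_{2^l}(Ta) fails; specifically, for all sufficiently large n it fails at the point γ_n - 1 where γ_n = 2^(3n+2^(3n)). -/

import Mathlib

/-- The geometric-mean transform `(Tx)(k) = (∏_{m=0}^k x(m))^(1/(k+1))`. -/
noncomputable def opT (x : ℕ → ℝ) (k : ℕ) : ℝ :=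
  (∏ m ∈ Finset.range (k + 1), x m) ^ (1 / ((k : ℝ) + 1))

/-- The dilation `(σ_M x)(k) = x(⌊k/M⌋)`. -/
def dil (M : ℕ) (x : ℕ → ℝ) (k : ℕ) : ℝ := x (k / M)

/-- The sequence `a = sup_{n ≥ 0} 2^(-2^(3n)) χ_{[0, 2^(2^(3n)))}`. -/
noncomputable def seqA (k : ℕ) : ℝ :=
  ⨆ n : ℕ, if k < 2 ^ 2 ^ (3 * n) then ((2 : ℝ) ^ 2 ^ (3 * n))⁻¹ else 0

/-- `γ_n = 2^(3n + 2^(3n))`. -/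
def gam (n : ℕ) : ℕ := 2 ^ (3 * n + 2 ^ (3 * n))

/-!
On `[2^(8^(n-1)), 2^(8^n))` the sequence `a` equals `2^(-8^n)`, so geometric means of `a` and of
`Ta` are controlled by averages of exponents. Up to `γ_n = 8^n · 2^(8^n)` one has
`Ta(m) ≥ 2^(-8^(n+1) + 7γ_n/(m+1))`, and the harmonic sum `∑_{2^(8^n) ≤ m < γ_n} 1/(m+1) ≥ 3n/2`
turns this into `T²a(γ_n - 1) ≥ 2^(-8^(n+1) + 21n/2)`. At the dilated point `γ_n/2^l - 1` the
first `2^(8^n)` factors are at most `1` and the others at most `2^(-8^(n+1))`, so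
`2^l σ_{2^l}(Ta)(γ_n - 1) ≤ 2^(l - 8^(n+1) + 8·2^l)`, which is smaller as soon as `n ≥ l + 8·2^l`.
-/

open Finset Real

lemma opT_mono {x y : ℕ → ℝ} {k : ℕ} (h0 : ∀ m ∈ range (k + 1), 0 ≤ x m)
    (h : ∀ m ∈ range (k + 1), x m ≤ y m) : opT x k ≤ opT y k :=
  rpow_le_rpow (prod_nonneg h0) (prod_le_prod h0 h) (by positivity)

lemma opT_const {c : ℝ} (hc : 0 ≤ c) (k : ℕ) : opT (fun _ => c) k = c := by
  rw [opT, prod_const, card_range, one_div, ← Nat.cast_add_one,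
    pow_rpow_inv_natCast hc k.succ_ne_zero]

lemma opT_two_rpow (e : ℕ → ℝ) (k : ℕ) :
    opT (fun m => (2 : ℝ) ^ e m) k = 2 ^ ((∑ m ∈ range (k + 1), e m) / (k + 1)) := by
  rw [opT, ← rpow_sum_of_pos two_pos, ← rpow_mul zero_le_two, mul_one_div]

lemma two_rpow_le_opT {x e : ℕ → ℝ} {k : ℕ} (h : ∀ m ∈ range (k + 1), (2 : ℝ) ^ e m ≤ x m) :
    (2 : ℝ) ^ ((∑ m ∈ range (k + 1), e m) / (k + 1)) ≤ opT x k := by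
  rw [← opT_two_rpow]
  exact opT_mono (fun _ _ => by positivity) h

lemma opT_le_two_rpow {x e : ℕ → ℝ} {k : ℕ} (h0 : ∀ m ∈ range (k + 1), 0 ≤ x m)
    (h : ∀ m ∈ range (k + 1), x m ≤ (2 : ℝ) ^ e m) :
    opT x k ≤ (2 : ℝ) ^ ((∑ m ∈ range (k + 1), e m) / (k + 1)) := by
  rw [← opT_two_rpow]
  exact opT_mono h0 h

lemma mul_add_one_sub_one_div {d : ℕ} (hd : 0 < d) (m : ℕ) : (d * (m + 1) - 1) / d = m := by
  rw [mul_add_one, Nat.add_sub_assoc hd, Nat.mul_add_div hd, Nat.div_eq_of_lt (by omega), add_zero]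

lemma sum_range_ite_lt {B K : ℕ} (h : B ≤ K) (u v : ℝ) :
    ∑ j ∈ range K, (if j < B then u else v) = B * u + (K - B) * v := by
  rw [← sum_range_add_sum_Ico _ h,
    sum_congr rfl fun j hj => if_pos (mem_range.1 hj),
    sum_congr rfl fun j hj => if_neg (mem_Ico.1 hj).1.not_gt]
  simp [Nat.cast_sub h]

-- Each dyadic block `[2^s B, 2^(s+1) B)` contributes at least `1/2`.
lemma half_le_sum_Ico_inv {B : ℕ} (hB : 0 < B) (t : ℕ) :
    (t : ℝ) / 2 ≤ ∑ j ∈ Ico B (2 ^ t * B), ((j : ℝ) + 1)⁻¹ := by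
  induction t with
  | zero => simp
  | succ t ih =>
    have hB' : (0 : ℝ) < B := by exact_mod_cast hB
    have hblock : (1 : ℝ) / 2 ≤ ∑ j ∈ Ico (2 ^ t * B) (2 ^ (t + 1) * B), ((j : ℝ) + 1)⁻¹ := by
      have hterm : ∀ j ∈ Ico (2 ^ t * B) (2 ^ (t + 1) * B),
          ((2 ^ (t + 1) * B : ℕ) : ℝ)⁻¹ ≤ ((j : ℝ) + 1)⁻¹ := fun j hj => by
        gcongr
        exact_mod_cast (mem_Ico.1 hj).2
      refine le_trans (le_of_eq ?_) (card_nsmul_le_sum _ _ _ hterm)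
      rw [Nat.card_Ico, nsmul_eq_mul, pow_succ,
        Nat.cast_sub (by nlinarith [Nat.one_le_two_pow (n := t)])]
      push_cast
      field_simp
      ring
    rw [← sum_Ico_consecutive _ (Nat.le_mul_of_pos_left B (by positivity))
      (Nat.mul_le_mul_right B (Nat.pow_le_pow_right two_pos t.le_succ))]
    push_cast
    linarith

-- `2^(2^(3n))`; `seqA` equals `2^(-8^(n+1))` on `[blockEnd n, blockEnd (n + 1))`.
def blockEnd (n : ℕ) : ℕ := 2 ^ 8 ^ n

lemma two_pow_three_mul (n : ℕ) : 2 ^ (3 * n) = 8 ^ n := by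
  rw [pow_mul]; rfl

lemma gam_eq (n : ℕ) : gam n = 2 ^ (3 * n) * blockEnd n := by
  rw [gam, pow_add, blockEnd, two_pow_three_mul]

lemma blockEnd_le_gam (n : ℕ) : blockEnd n ≤ gam n := by
  rw [gam_eq]; exact Nat.le_mul_of_pos_left _ (by positivity)

lemma gam_le_blockEnd_succ (n : ℕ) : gam n ≤ blockEnd (n + 1) := by
  rw [gam, blockEnd, two_pow_three_mul, pow_succ]
  refine Nat.pow_le_pow_right two_pos ?_
  have := Nat.lt_two_pow_self (n := 3 * n)
  rw [two_pow_three_mul] at this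
  omega

lemma blockEnd_mono {m n : ℕ} (h : m ≤ n) : blockEnd m ≤ blockEnd n :=
  Nat.pow_le_pow_right two_pos (Nat.pow_le_pow_right (by norm_num) h)

lemma bddAbove_seqA_terms (k : ℕ) : BddAbove (Set.range fun n : ℕ =>
    if k < 2 ^ 2 ^ (3 * n) then ((2 : ℝ) ^ 2 ^ (3 * n))⁻¹ else 0) := by
  refine ⟨1, ?_⟩
  rintro _ ⟨n, rfl⟩
  dsimp only
  split_ifs
  exacts [inv_le_one_of_one_le₀ (one_le_pow₀ one_le_two), zero_le_one]

lemma seqA_term_eq (k n : ℕ) :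
    (if k < 2 ^ 2 ^ (3 * n) then ((2 : ℝ) ^ 2 ^ (3 * n))⁻¹ else 0)
      = if k < blockEnd n then (2 : ℝ) ^ (-(8 : ℝ) ^ n) else 0 := by
  rw [two_pow_three_mul, rpow_neg zero_le_two, ← rpow_natCast]
  push_cast
  rfl

lemma seqA_nonneg (k : ℕ) : 0 ≤ seqA k :=
  le_ciSup_of_le (bddAbove_seqA_terms k) 0 (by split_ifs <;> positivity)

lemma seqA_le_one (k : ℕ) : seqA k ≤ 1 :=
  ciSup_le fun n => by
    split_ifs
    exacts [inv_le_one_of_one_le₀ (one_le_pow₀ one_le_two), zero_le_one]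

lemma le_seqA {k n : ℕ} (h : k < blockEnd n) : (2 : ℝ) ^ (-(8 : ℝ) ^ n) ≤ seqA k := by
  have := le_ciSup (bddAbove_seqA_terms k) n
  rwa [seqA_term_eq, if_pos h] at this

lemma seqA_le {k n : ℕ} (h : blockEnd n ≤ k) : seqA k ≤ (2 : ℝ) ^ (-(8 : ℝ) ^ (n + 1)) :=
  ciSup_le fun m => by
    rw [seqA_term_eq]
    split_ifs with hm
    · have hnm : n < m := by
        by_contra! hmn
        exact (h.trans_lt hm).not_ge (blockEnd_mono hmn)
      gcongr
      exacts [one_le_two, by norm_num, hnm]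
    · positivity

lemma le_opT_seqA_of_lt {m n : ℕ} (h : m < blockEnd n) :
    (2 : ℝ) ^ (-(8 : ℝ) ^ n) ≤ opT seqA m := by
  rw [← opT_const (c := (2 : ℝ) ^ (-(8 : ℝ) ^ n)) (by positivity) m]
  exact opT_mono (fun _ _ => by positivity)
    fun j hj => le_seqA ((mem_range_succ_iff.1 hj).trans_lt h)

lemma le_opT_seqA {m n : ℕ} (h₁ : blockEnd n ≤ m + 1) (h₂ : m + 1 ≤ blockEnd (n + 1)) :
    (2 : ℝ) ^ (-(8 : ℝ) ^ (n + 1) + 7 * gam n / (m + 1)) ≤ opT seqA m := by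
  refine le_trans (le_of_eq ?_) (two_rpow_le_opT
    (e := fun j => if j < blockEnd n then -(8 : ℝ) ^ n else -(8 : ℝ) ^ (n + 1)) fun j hj => ?_)
  · rw [sum_range_ite_lt h₁, gam_eq]
    push_cast
    rw [pow_mul]
    congr 1
    field_simp
    ring
  · split_ifs with hj'
    · exact le_seqA hj'
    · exact le_seqA (n := n + 1) ((mem_range.1 hj).trans_le h₂)

lemma opT_seqA_le {m n : ℕ} (h : blockEnd n ≤ m + 1) :
    opT seqA m ≤ (2 : ℝ) ^ (-(8 : ℝ) ^ (n + 1) + 8 ^ (n + 1) * blockEnd n / (m + 1)) := by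
  refine le_trans (opT_le_two_rpow (fun j _ => seqA_nonneg j)
    (e := fun j => if j < blockEnd n then 0 else -(8 : ℝ) ^ (n + 1)) fun j _ => ?_) (le_of_eq ?_)
  · split_ifs with hj
    · exact (seqA_le_one j).trans_eq (rpow_zero 2).symm
    · exact seqA_le (not_lt.1 hj)
  · rw [sum_range_ite_lt h]
    push_cast
    congr 1
    field_simp
    ring

lemma le_opT_opT_seqA (n : ℕ) :
    (2 : ℝ) ^ (-(8 : ℝ) ^ (n + 1) + 21 * n / 2) ≤ opT (opT seqA) (gam n - 1) := by
  have hγ : 0 < gam n := Nat.two_pow_pos _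
  let e : ℕ → ℝ := fun m =>
    -(8 : ℝ) ^ (n + 1) + if m < blockEnd n then 0 else 7 * (gam n : ℝ) / ((m : ℝ) + 1)
  have hharmonic : (3 * n : ℝ) / 2 ≤ ∑ m ∈ Ico (blockEnd n) (gam n), ((m : ℝ) + 1)⁻¹ := by
    have := half_le_sum_Ico_inv (B := blockEnd n) (Nat.two_pow_pos _) (3 * n)
    rwa [← gam_eq, Nat.cast_mul, Nat.cast_ofNat] at this
  have hsum : ∑ m ∈ range (gam n), e m = -(8 : ℝ) ^ (n + 1) * gam n
      + 7 * gam n * ∑ m ∈ Ico (blockEnd n) (gam n), ((m : ℝ) + 1)⁻¹ := by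
    rw [sum_add_distrib, sum_const, card_range, nsmul_eq_mul,
      ← sum_range_add_sum_Ico _ (blockEnd_le_gam n),
      sum_congr rfl fun m hm => if_pos (mem_range.1 hm),
      sum_congr rfl fun m hm => if_neg (mem_Ico.1 hm).1.not_gt, mul_sum]
    simp [div_eq_mul_inv, mul_comm]
  have hT : ∀ m ∈ range (gam n - 1 + 1), (2 : ℝ) ^ e m ≤ opT seqA m := fun m hm => by
    have hmγ : m + 1 ≤ gam n := by have := mem_range.1 hm; omega
    by_cases hmB : m < blockEnd n
    · simpa [e, hmB] using
        le_opT_seqA_of_lt (hmB.trans_le ((blockEnd_le_gam n).trans (gam_le_blockEnd_succ n)))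
    · simpa [e, hmB] using
        le_opT_seqA (by omega) (hmγ.trans (gam_le_blockEnd_succ n))
  refine le_trans (rpow_le_rpow_of_exponent_le one_le_two ?_) (two_rpow_le_opT hT)
  rw [Nat.sub_add_cancel hγ, Nat.cast_pred hγ, sub_add_cancel, hsum,
    le_div_iff₀ (by exact_mod_cast hγ)]
  nlinarith

lemma two_pow_mul_dil_opT_seqA_le {l n : ℕ} (hl : l ≤ 3 * n) :
    (2 : ℝ) ^ l * dil (2 ^ l) (opT seqA) (gam n - 1)
      ≤ (2 : ℝ) ^ ((l : ℝ) + (-(8 : ℝ) ^ (n + 1) + 8 * 2 ^ l)) := by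
  obtain ⟨c, hc⟩ : ∃ c, 2 ^ (3 * n) = 2 ^ l * c :=
    ⟨2 ^ (3 * n - l), by rw [← pow_add, Nat.add_sub_cancel' hl]⟩
  have hc0 : 0 < c := Nat.pos_of_mul_pos_left (hc ▸ Nat.two_pow_pos _)
  set m := c * blockEnd n - 1
  have hm : m + 1 = c * blockEnd n := Nat.sub_add_cancel (Nat.mul_pos hc0 (Nat.two_pow_pos _))
  have hdil : dil (2 ^ l) (opT seqA) (gam n - 1) = opT seqA m := by
    rw [dil, gam_eq, hc, mul_assoc, ← hm]
    exact congrArg _ (mul_add_one_sub_one_div (Nat.two_pow_pos l) m)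
  have hexp : (8 : ℝ) ^ (n + 1) * blockEnd n / (m + 1) = 8 * 2 ^ l := by
    have hcR : (8 : ℝ) ^ n = 2 ^ l * c := by exact_mod_cast (two_pow_three_mul n).symm.trans hc
    have hmR : (m : ℝ) + 1 = c * blockEnd n := by exact_mod_cast hm
    have hB : (blockEnd n : ℝ) ≠ 0 := by exact_mod_cast (Nat.two_pow_pos _).ne'
    rw [hmR, pow_succ, hcR]
    field_simp
  have hTa := opT_seqA_le (m := m) (n := n) (hm ▸ Nat.le_mul_of_pos_left _ hc0)
  rw [hexp] at hTa
  rw [hdil, rpow_add two_pos, rpow_natCast]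
  gcongr

/-- For every `l ≥ 1` the pointwise inequality `T²a ≤ 2^l σ_{2^l}(Ta)` fails;
specifically, for all sufficiently large `n` it fails at the point `γ_n - 1`. -/
theorem stmt_12 :
    ∀ l : ℕ, 1 ≤ l →
      (¬ ∀ k, opT (opT seqA) k ≤ (2 : ℝ) ^ l * dil (2 ^ l) (opT seqA) k) ∧
      ∃ N : ℕ, ∀ n ≥ N,
        ¬ opT (opT seqA) (gam n - 1) ≤ (2 : ℝ) ^ l * dil (2 ^ l) (opT seqA) (gam n - 1) := by
  intro l _
  have hfails : ∀ n ≥ l + 8 * 2 ^ l,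
      ¬ opT (opT seqA) (gam n - 1) ≤ (2 : ℝ) ^ l * dil (2 ^ l) (opT seqA) (gam n - 1) := by
    intro n hn hle
    have hnR : (l : ℝ) + 8 * 2 ^ l ≤ n := by exact_mod_cast hn
    have hexp : (l : ℝ) + (-(8 : ℝ) ^ (n + 1) + 8 * 2 ^ l) < -(8 : ℝ) ^ (n + 1) + 21 * n / 2 := by
      nlinarith [pow_pos (two_pos (α := ℝ)) l]
    exact (rpow_lt_rpow_of_exponent_lt one_lt_two hexp).not_ge
      (((le_opT_opT_seqA n).trans hle).trans (two_pow_mul_dil_opT_seqA_le (by omega)))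
  exact ⟨fun hall => hfails _ le_rfl (hall _), _, hfails⟩
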